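/- arXiv:2504.16617 — 4 statements merged into one kernel-verified Lean document; each statement's English description precedes it below -/
import Mathlib

section
/- Every property P ⊆ Σ* can be expressed as the intersection of a safety property and a liveness property; concretely, P = cl(P) ∩ (P ∪ (Σ* \ cl(P))), where cl(P) = { y | ∃ x ∈ P, y is a prefix of x } is a safety property and P ∪ (Σ* \ cl(P)) is a liveness property. -/
def Safety {E : Type*} (P : Set (List E)) : Prop :=
  ∀ x y : List E, x ++ y ∈ P → x ∈ P

def Liveness {E : Type*} (P : Set (List E)) : Prop :=
  ∀ x : List E, ∃ y : List E, x ++ y ∈ P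

/-- Prefix closure of a property. -/
def cl {E : Type*} (P : Set (List E)) : Set (List E) :=
  {y | ∃ x ∈ P, y <+: x}

/-! A trace lies in `cl P` exactly when it can still be extended into `P`. Hence `cl P` is closed
under prefixes, and from a trace outside `cl P` the liveness part is already reached by the
empty extension. Since `P ⊆ cl P`, intersecting with `cl P` cuts the liveness part back to `P`. -/

section

variable {E : Type*} {P : Set (List E)}

theorem mem_cl_iff_exists_append {y : List E} : y ∈ cl P ↔ ∃ z, y ++ z ∈ P := by
  constructor
  · rintro ⟨x, hx, z, rfl⟩
    exact ⟨z, hx⟩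
  · rintro ⟨z, hz⟩
    exact ⟨y ++ z, hz, y.prefix_append z⟩

theorem subset_cl : P ⊆ cl P :=
  fun x hx => ⟨x, hx, List.prefix_refl x⟩

theorem safety_cl : Safety (cl P) := by
  intro x y hxy
  obtain ⟨z, hz⟩ := mem_cl_iff_exists_append.1 hxy
  exact mem_cl_iff_exists_append.2 ⟨y ++ z, by rwa [← List.append_assoc]⟩

theorem liveness_union_diff_cl : Liveness (P ∪ (Set.univ \ cl P)) := by
  intro x
  by_cases hx : x ∈ cl P
  · obtain ⟨z, hz⟩ := mem_cl_iff_exists_append.1 hx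
    exact ⟨z, Or.inl hz⟩
  · exact ⟨[], Or.inr ⟨trivial, by rwa [List.append_nil]⟩⟩

end

theorem Set.eq_inter_union_diff_of_subset {α : Type*} {s t : Set α} (h : s ⊆ t) :
    s = t ∩ (s ∪ (Set.univ \ t)) := by
  rw [Set.inter_union_distrib_left, Set.inter_eq_right.2 h, Set.inter_sdiff_self, Set.union_empty]

/-- Every property is the intersection of a safety and a liveness property:
    P = cl(P) ∩ (P ∪ (Σ* \ cl(P))). -/
theorem safety_liveness_decomposition {E : Type*} (P : Set (List E)) :
    Safety (cl P) ∧ Liveness (P ∪ (Set.univ \ cl P)) ∧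
      P = cl P ∩ (P ∪ (Set.univ \ cl P)) :=
  ⟨safety_cl, liveness_union_diff_cl, Set.eq_inter_union_diff_of_subset subset_cl⟩
end

section
/- A property P ⊆ Σ* is an authorization property if and only if it is a safety property and is strictly localized (P = P̂). Formally: [∀ x y ∈ Σ*, (∀ u ∈ S, (x ++ y)↾u ∈ P_u) → x ∈ P] if and only if [P is prefix-closed and P = { t | ∀ u, t↾u ∈ P_u }]. -/
def purge {E S : Type*} [DecidableEq S] (part : E → S) (t : List E) (u : S) : List E :=
  t.filter (fun e => decide (part e = u))

def localProj {E S : Type*} [DecidableEq S] (part : E → S) (P : Set (List E)) (u : S) :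
    Set (List E) :=
  (fun x => purge part x u) '' P

def hat {E S : Type*} [DecidableEq S] (part : E → S) (P : Set (List E)) : Set (List E) :=
  {t | ∀ u, purge part t u ∈ localProj part P u}

theorem subset_hat {E S : Type*} [DecidableEq S] (part : E → S) (P : Set (List E)) :
    P ⊆ hat part P :=
  fun t ht _ => ⟨t, ht, rfl⟩

theorem forall_append_mem_imp_mem_iff_of_subset {E : Type*} {P Q : Set (List E)} (hPQ : P ⊆ Q) :
    (∀ x y : List E, x ++ y ∈ Q → x ∈ P) ↔ (∀ x y : List E, x ++ y ∈ P → x ∈ P) ∧ P = Q := by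
  constructor
  · intro h
    have hQP : Q ⊆ P := fun t ht => h t [] (by rwa [List.append_nil])
    exact ⟨fun x y hxy => h x y (hPQ hxy), hPQ.antisymm hQP⟩
  · rintro ⟨hsafe, rfl⟩
    exact hsafe

/-- Authorization = safety + strict localization. -/
theorem auth_iff_safety_and_localized {E S : Type*} [DecidableEq S] (part : E → S)
    (P : Set (List E)) :
    (∀ x y : List E, (∀ u : S, purge part (x ++ y) u ∈ localProj part P u) → x ∈ P) ↔
      ((∀ x y : List E, x ++ y ∈ P → x ∈ P) ∧ P = hat part P) :=
  -- the premise of an authorization property is `x ++ y ∈ hat part P`, unfolded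
  forall_append_mem_imp_mem_iff_of_subset (subset_hat part P)
end

section
/- Every availability property is, after strict localization, a liveness property: if D ⊆ Σ* satisfies the availability condition, then the localization D̂ = { t | ∀ u, t↾u ∈ D_u } is a liveness property over Σ*. -/
/-!
Only the finitely many subjects occurring in `x` or in one fixed `d ∈ D` need attention. For each of
them, availability supplies a suffix made of that subject's own events, invisible to every other
subject, so these suffixes can be appended one after another. Every remaining subject sees the empty
trace, which is the projection of `d`; and `D` is nonempty as soon as there is a subject at all,
again by availability.
-/

def IsAvailable {E S : Type*} [DecidableEq S] (part : E → S) (D : Set (List E)) : Prop :=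
  ∀ x : List E, ∀ u : S, ∃ y : List E, (∀ e ∈ y, part e = u) ∧
    purge part x u ++ y ∈ localProj part D u

section

variable {E S : Type*} [DecidableEq S] (part : E → S)

theorem purge_append (a b : List E) (u : S) :
    purge part (a ++ b) u = purge part a u ++ purge part b u :=
  List.filter_append ..

theorem purge_eq_nil_of_forall_ne {t : List E} {u : S} (h : ∀ e ∈ t, part e ≠ u) :
    purge part t u = [] := by
  simpa [purge] using h

theorem purge_eq_self_of_forall_eq {t : List E} {u : S} (h : ∀ e ∈ t, part e = u) :
    purge part t u = t := by
  simpa [purge] using h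

variable {part}

theorem IsAvailable.nonempty [Nonempty S] {D : Set (List E)} (hD : IsAvailable part D) :
    D.Nonempty := by
  obtain ⟨-, -, d, hd, -⟩ := hD [] (Classical.arbitrary S)
  exact ⟨d, hd⟩

theorem IsAvailable.exists_append_purge_mem_localProj {D : Set (List E)}
    (hD : IsAvailable part D) (L : List S) (x : List E) :
    ∃ z : List E, (∀ e ∈ z, part e ∈ L) ∧
      ∀ u ∈ L, purge part (x ++ z) u ∈ localProj part D u := by
  induction L with
  | nil => exact ⟨[], by simp, by simp⟩
  | cons u L ih =>
    obtain ⟨z, hzL, hz⟩ := ih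
    obtain ⟨y, hyu, hy⟩ := hD (x ++ z) u
    refine ⟨z ++ y, ?_, fun v hv => ?_⟩
    · intro e he
      rcases List.mem_append.mp he with he | he
      · exact List.mem_cons_of_mem _ (hzL e he)
      · exact hyu e he ▸ List.mem_cons_self
    rw [← List.append_assoc, purge_append]
    by_cases hvu : v = u
    · subst hvu
      rwa [purge_eq_self_of_forall_eq part hyu]
    · rw [purge_eq_nil_of_forall_ne part (t := y) fun e he => hyu e he ▸ Ne.symm hvu,
        List.append_nil]
      exact hz v ((List.mem_cons.mp hv).resolve_left hvu)

end

/-- The strict localization of an availability property is a liveness property. -/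
theorem localization_of_availability_is_liveness {E S : Type*} [DecidableEq S]
    (part : E → S) (D : Set (List E))
    (hAvail : ∀ x : List E, ∀ u : S, ∃ y : List E, (∀ e ∈ y, part e = u) ∧
        purge part x u ++ y ∈ localProj part D u) :
    ∀ x : List E, ∃ z : List E, x ++ z ∈ hat part D := by
  intro x
  rcases isEmpty_or_nonempty S with _ | _
  · exact ⟨[], fun u => isEmptyElim u⟩
  obtain ⟨d, hd⟩ := IsAvailable.nonempty hAvail
  set L := (x ++ d).map part
  obtain ⟨z, hzL, hz⟩ := IsAvailable.exists_append_purge_mem_localProj hAvail L x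
  refine ⟨z, fun u => ?_⟩
  by_cases hu : u ∈ L
  · exact hz u hu
  have hxz : purge part (x ++ z) u = [] := purge_eq_nil_of_forall_ne part fun e he heu => by
    rcases List.mem_append.mp he with he | he
    · exact hu (heu ▸ List.mem_map_of_mem (by simp [he]))
    · exact hu (heu ▸ hzL e he)
  have hd' : purge part d u = [] := purge_eq_nil_of_forall_ne part fun e he heu =>
    hu (heu ▸ List.mem_map_of_mem (by simp [he]))
  rw [hxz, ← hd']
  exact ⟨d, hd, rfl⟩
end

section
/- The Laplace mechanism is ε-differentially private: if f : D → ℝ is a query with global sensitivity GS_f = sup over adjacent databases x, x' of |f(x) − f(x')|, and F(x) = f(x) + Lap(GS_f/ε), then for all adjacent x, x' and every measurable set Y, Pr[F(x) ∈ Y] ≤ e^ε · Pr[F(x') ∈ Y]. -/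
/-! By the triangle inequality `|y - b| ≤ |y - a| + |a - b|`, moving the centre of a Laplace
density of scale `λ` by `d` changes it pointwise by a factor of at most `exp (|d| / λ)`. For
`|d| ≤ GS` and `λ = GS / ε` this factor is at most `e^ε`, and integrating over `Y` gives the
claim. -/

open MeasureTheory

noncomputable def lapd (y lam : ℝ) : ℝ :=
  (1 / (2 * lam)) * Real.exp (-(|y|) / lam)

open Real Set

lemma integrable_exp_neg_abs_div {b : ℝ} (hb : 0 < b) :
    Integrable (fun y : ℝ => exp (-|y| / b)) := by
  rw [← integrableOn_univ, ← Iic_union_Ioi (a := 0)]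
  refine IntegrableOn.union ?_ ?_
  · refine (integrableOn_exp_mul_Iic (inv_pos.2 hb) 0).congr_fun (fun y hy => ?_) measurableSet_Iic
    rw [abs_of_nonpos hy]
    ring_nf
  · refine (integrableOn_exp_mul_Ioi (neg_neg_of_pos (inv_pos.2 hb)) 0).congr_fun
      (fun y hy => ?_) measurableSet_Ioi
    rw [abs_of_pos hy]
    ring_nf

lemma integrable_lapd_sub {lam : ℝ} (hlam : 0 < lam) (c : ℝ) :
    Integrable (fun y : ℝ => lapd (y - c) lam) :=
  ((integrable_exp_neg_abs_div hlam).comp_sub_right c).const_mul _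

lemma lapd_nonneg {lam : ℝ} (hlam : 0 ≤ lam) (y : ℝ) : 0 ≤ lapd y lam := by
  unfold lapd
  positivity

lemma lapd_sub_le_exp_mul_lapd_sub {lam : ℝ} (hlam : 0 ≤ lam) (y a b : ℝ) :
    lapd (y - a) lam ≤ exp (|a - b| / lam) * lapd (y - b) lam := by
  have hexp : -|y - a| / lam ≤ |a - b| / lam + -|y - b| / lam := by
    rw [← add_div]
    gcongr
    linarith [abs_sub_le y a b]
  unfold lapd
  rw [mul_left_comm, ← exp_add]
  gcongr

lemma setIntegral_lapd_sub_le {lam : ℝ} (hlam : 0 < lam) (a b : ℝ) (Y : Set ℝ) :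
    ∫ y in Y, lapd (y - a) lam ≤ exp (|a - b| / lam) * ∫ y in Y, lapd (y - b) lam := by
  rw [← integral_const_mul]
  exact integral_mono (integrable_lapd_sub hlam a).integrableOn
    ((integrable_lapd_sub hlam b).const_mul _).integrableOn
    (lapd_sub_le_exp_mul_lapd_sub hlam.le · a b)

/-- The Laplace mechanism F(x) = f(x) + Lap(GS/ε) is ε-differentially private:
    for adjacent databases, the output probabilities differ by at most a
    factor of e^ε on every measurable set. -/
theorem laplace_mechanism_dp {D : Type*} (Adj : D → D → Prop) (f : D → ℝ)
    (GS ε : ℝ) (hGS : 0 < GS) (hε : 0 < ε)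
    (hsens : ∀ x x', Adj x x' → |f x - f x'| ≤ GS) :
    ∀ x x', Adj x x' → ∀ Y : Set ℝ, MeasurableSet Y →
      (∫ y in Y, lapd (y - f x) (GS / ε)) ≤
        Real.exp ε * ∫ y in Y, lapd (y - f x') (GS / ε) := by
  intro x x' hadj Y _
  have hlam : 0 < GS / ε := div_pos hGS hε
  have hshift : |f x - f x'| / (GS / ε) ≤ ε := by
    rw [div_le_iff₀ hlam, mul_div_cancel₀ GS hε.ne']
    exact hsens x x' hadj
  calc (∫ y in Y, lapd (y - f x) (GS / ε))
      ≤ exp (|f x - f x'| / (GS / ε)) * ∫ y in Y, lapd (y - f x') (GS / ε) :=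
        setIntegral_lapd_sub_le hlam _ _ Y
    _ ≤ exp ε * ∫ y in Y, lapd (y - f x') (GS / ε) := by
        gcongr
        exact integral_nonneg (lapd_nonneg hlam.le <| · - f x')
end
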